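/- arXiv:1106.0826 — 4 statements merged into one kernel-verified Lean document; each statement's English description precedes it below -/
import Mathlib

section
/- Let p > 1 and let w₂ : ℝ → (0,∞) be locally integrable with w₂ ∈ A_1^- (i.e., M^+ w₂ ≤ C w₂ a.e., where M^+ f(x) = sup_{h>0} (1/h)∫_x^{x+h}|f|). Then w₂^{1-p} ∈ RH_∞^+: there is a constant C' such that for almost every x and every b > x, w₂(x)^{1-p} ≤ C' (1/(b-x)) ∫_x^b w₂(y)^{1-p} dy. -/
/-!
Averaging the `A₁⁻` condition over `[x, b]` gives `⨍_{[x,b]} w ≤ C w(x)`. Since `t ↦ t ^ (1 - p)`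
is decreasing and convex on `(0, ∞)`, this and Jensen's inequality give
`w(x) ^ (1 - p) ≤ C ^ (p - 1) (⨍ w) ^ (1 - p) ≤ C ^ (p - 1) ⨍ w ^ (1 - p)`.
Jensen needs `w ^ (1 - p)` to be integrable on `[x, b]`; this holds because the `A₁⁻` condition on
`[y, b + 1]` bounds `w(y)` below by `(b + 1 - x)⁻¹ C⁻¹ ∫_b^{b+1} w` for a.e. `y ∈ (x, b]`.
-/

open MeasureTheory intervalIntegral Set

theorem convexOn_rpow_of_nonpos {c : ℝ} (hc : c ≤ 0) : ConvexOn ℝ (Ioi 0) fun t : ℝ ↦ t ^ c := by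
  refine ⟨convex_Ioi 0, fun x (hx : 0 < x) y (hy : 0 < y) a b ha hb hab ↦ ?_⟩
  simp only [smul_eq_mul]
  calc (a * x + b * y) ^ c
      ≤ (x ^ a * y ^ b) ^ c := Real.rpow_le_rpow_of_nonpos (by positivity)
        (Real.geom_mean_le_arith_mean2_weighted ha hb hx.le hy.le hab) hc
    _ = (x ^ c) ^ a * (y ^ c) ^ b := by
        rw [Real.mul_rpow (by positivity) (by positivity), ← Real.rpow_mul hx.le,
          ← Real.rpow_mul hy.le, mul_comm a, mul_comm b, Real.rpow_mul hx.le, Real.rpow_mul hy.le]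
    _ ≤ a * x ^ c + b * y ^ c :=
        Real.geom_mean_le_arith_mean2_weighted ha hb (by positivity) (by positivity) hab

section Average

variable {α : Type*} [MeasurableSpace α] {μ : Measure α} {s : Set α} {f : α → ℝ} {c δ : ℝ}

theorem integrableOn_rpow_of_nonpos_of_ae_le (hs : μ s ≠ ⊤) (hc : c ≤ 0) (hδ : 0 < δ)
    (hf : AEStronglyMeasurable f (μ.restrict s)) (hfδ : ∀ᵐ y ∂μ.restrict s, δ ≤ f y) :
    IntegrableOn (fun y ↦ f y ^ c) s μ := by
  refine Integrable.mono' (integrableOn_const hs (C := δ ^ c))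
    (hf.aemeasurable.pow_const c).aestronglyMeasurable ?_
  filter_upwards [hfδ] with y hy
  rw [Real.norm_of_nonneg (Real.rpow_nonneg (hδ.trans_le hy).le _)]
  exact Real.rpow_le_rpow_of_nonpos hδ hy hc

theorem rpow_setAverage_le_setAverage_rpow (h0 : μ s ≠ 0) (hs : μ s ≠ ⊤) (hc : c ≤ 0)
    (hδ : 0 < δ) (hf : IntegrableOn f s μ) (hfδ : ∀ᵐ y ∂μ.restrict s, δ ≤ f y) :
    (⨍ y in s, f y ∂μ) ^ c ≤ ⨍ y in s, f y ^ c ∂μ :=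
  ((convexOn_rpow_of_nonpos hc).subset (Ici_subset_Ioi.2 hδ) (convex_Ici δ)).map_set_average_le
    (fun _ ht ↦ (Real.continuousAt_rpow_const _ _ (.inl (hδ.trans_le ht).ne')).continuousWithinAt)
    isClosed_Ici h0 hs hfδ hf
    (integrableOn_rpow_of_nonpos_of_ae_le hs hc hδ hf.aestronglyMeasurable hfδ)

end Average

theorem rpow_intervalAverage_le_intervalAverage_rpow {f : ℝ → ℝ} {a b c δ : ℝ} (hab : a < b)
    (hc : c ≤ 0) (hδ : 0 < δ) (hf : IntervalIntegrable f volume a b)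
    (hfδ : ∀ᵐ y ∂volume.restrict (Ioc a b), δ ≤ f y) :
    (⨍ y in a..b, f y) ^ c ≤ ⨍ y in a..b, f y ^ c := by
  rw [uIoc_of_le hab.le]
  exact rpow_setAverage_le_setAverage_rpow (by simp [hab]) measure_Ioc_lt_top.ne hc hδ
    ((intervalIntegrable_iff_integrableOn_Ioc_of_le hab.le).1 hf) hfδ

theorem MeasureTheory.LocallyIntegrable.intervalIntegrable {f : ℝ → ℝ}
    (hf : LocallyIntegrable f volume) (a b : ℝ) : IntervalIntegrable f volume a b :=
  (hf.integrableOn_isCompact isCompact_uIcc).intervalIntegrable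

/-- `M⁺ w ≤ C w` almost everywhere, with `M⁺` the one-sided right maximal operator
(`|w| = w` for the positive weights considered here). -/
def IsA1Minus (w : ℝ → ℝ) (C : ℝ) : Prop :=
  ∀ᵐ x : ℝ, ∀ h : ℝ, 0 < h → h⁻¹ * ∫ y in x..(x + h), w y ≤ C * w x

namespace IsA1Minus

variable {w : ℝ → ℝ} {C : ℝ}

theorem ae_intervalAverage_le (hA1 : IsA1Minus w C) :
    ∀ᵐ x : ℝ, ∀ b, x < b → ⨍ y in x..b, w y ≤ C * w x := by
  filter_upwards [hA1] with x hx b hxb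
  simpa [interval_average_eq] using hx (b - x) (sub_pos.2 hxb)

theorem const_pos (hA1 : IsA1Minus w C) (hw : ∀ x, 0 < w x)
    (hloc : LocallyIntegrable w volume) : 0 < C := by
  obtain ⟨x, hx⟩ := hA1.ae_intervalAverage_le.exists
  have hint : 0 < ∫ y in x..x + 1, w y :=
    intervalIntegral_pos_of_pos (hloc.intervalIntegrable _ _) hw (by linarith)
  have := hx (x + 1) (by linarith)
  rw [interval_average_eq, add_sub_cancel_left, inv_one, one_smul] at this
  exact pos_of_mul_pos_left (hint.trans_le this) (hw x).le

theorem exists_pos_ae_le_on_Ioc (hA1 : IsA1Minus w C) (hw : ∀ x, 0 < w x)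
    (hloc : LocallyIntegrable w volume) {a b : ℝ} (hab : a ≤ b) :
    ∃ δ > 0, ∀ᵐ y ∂volume.restrict (Ioc a b), δ ≤ w y := by
  set J := ∫ z in b..b + 1, w z
  have hJ : 0 < J := intervalIntegral_pos_of_pos (hloc.intervalIntegrable _ _) hw (by linarith)
  have hC := hA1.const_pos hw hloc
  have hab' : 0 < b + 1 - a := by linarith
  refine ⟨(b + 1 - a)⁻¹ * J / C, by positivity, ?_⟩
  filter_upwards [ae_restrict_of_ae hA1.ae_intervalAverage_le, ae_restrict_mem measurableSet_Ioc]
    with y hy ⟨hay, hyb⟩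
  have hJle : J ≤ ∫ z in y..b + 1, w z := by
    rw [← integral_add_adjacent_intervals (hloc.intervalIntegrable y b)
      (hloc.intervalIntegrable b (b + 1))]
    have := integral_nonneg (μ := volume) hyb (fun z _ ↦ (hw z).le)
    linarith
  rw [div_le_iff₀' hC]
  have hy1 : 0 < b + 1 - y := by linarith
  calc (b + 1 - a)⁻¹ * J ≤ (b + 1 - y)⁻¹ * ∫ z in y..b + 1, w z := by gcongr
    _ = ⨍ z in y..b + 1, w z := (interval_average_eq _ _ _).symm
    _ ≤ C * w y := hy (b + 1) (by linarith)

end IsA1Minus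

/-- If `w₂ ∈ A_1^-` then `w₂^{1-p} ∈ RH_∞^+`: a.e. `x`, for every `b > x`,
`w₂(x)^{1-p} ≤ C' (1/(b-x)) ∫_x^b w₂^{1-p}`. -/
theorem a1_minus_pow_mem_rh_infty_plus (p : ℝ) (hp : 1 < p)
    (w₂ : ℝ → ℝ) (hw : ∀ x, 0 < w₂ x) (hloc : LocallyIntegrable w₂ volume)
    (C : ℝ) (hA1 : ∀ᵐ x : ℝ, ∀ h : ℝ, 0 < h →
      h⁻¹ * ∫ y in x..(x + h), w₂ y ≤ C * w₂ x) :
    ∃ C' : ℝ, ∀ᵐ x : ℝ, ∀ b : ℝ, x < b →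
      w₂ x ^ (1 - p) ≤ C' * ((b - x)⁻¹ * ∫ y in x..b, w₂ y ^ (1 - p)) := by
  have hc : 1 - p ≤ 0 := by linarith
  have hC := IsA1Minus.const_pos hA1 hw hloc
  refine ⟨C ^ (p - 1), ?_⟩
  filter_upwards [IsA1Minus.ae_intervalAverage_le hA1] with x hx b hxb
  obtain ⟨δ, hδ, hwδ⟩ := IsA1Minus.exists_pos_ae_le_on_Ioc hA1 hw hloc hxb.le
  have hJensen : (⨍ y in x..b, w₂ y) ^ (1 - p) ≤ ⨍ y in x..b, w₂ y ^ (1 - p) :=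
    rpow_intervalAverage_le_intervalAverage_rpow hxb hc hδ (hloc.intervalIntegrable x b) hwδ
  have havg : 0 < ⨍ y in x..b, w₂ y := by
    rw [interval_average_eq]
    exact mul_pos (inv_pos.2 (sub_pos.2 hxb))
      (intervalIntegral_pos_of_pos (hloc.intervalIntegrable _ _) hw hxb)
  calc w₂ x ^ (1 - p) = C ^ (p - 1) * (C * w₂ x) ^ (1 - p) := by
        rw [Real.mul_rpow hC.le (hw x).le, ← mul_assoc, ← Real.rpow_add hC]
        simp
    _ ≤ C ^ (p - 1) * (⨍ y in x..b, w₂ y) ^ (1 - p) := by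
        exact mul_le_mul_of_nonneg_left (Real.rpow_le_rpow_of_nonpos havg (hx b hxb) hc)
          (by positivity)
    _ ≤ C ^ (p - 1) * ((b - x)⁻¹ * ∫ y in x..b, w₂ y ^ (1 - p)) := by
        rw [← smul_eq_mul (a := (b - x)⁻¹), ← interval_average_eq]
        exact mul_le_mul_of_nonneg_left hJensen (by positivity)
end

section
/- Let 1 < r < ∞ and let w : ℝ → [0,∞) be locally integrable. Suppose w satisfies: for all a < b < c with b - a = 2(c - b), (1/(b-a)) ∫_a^b w(x)^r dx ≤ C ((1/(c-b)) ∫_b^c w(x) dx)^r. Then w also satisfies: for all a < b < c with b - a = c - b, (1/(b-a)) ∫_a^b w(x)^r dx ≤ C' ((1/(c-b)) ∫_b^c w(x) dx)^r, with C' depending only on C and r. -/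
open MeasureTheory intervalIntegral

/-- Equivalence of two characterizations of the one-sided reverse Hölder class
`RH_r^+`: the `b - a = 2(c - b)` form implies the `b - a = c - b` form. -/
theorem rh_plus_characterization (r : ℝ) (hr : 1 < r) (w : ℝ → ℝ)
    (hw : ∀ x, 0 ≤ w x) (hloc : LocallyIntegrable w volume)
    (hlocr : LocallyIntegrable (fun x => w x ^ r) volume)
    (C : ℝ) (hC : ∀ a b c : ℝ, a < b → b < c → b - a = 2 * (c - b) →
      (b - a)⁻¹ * ∫ x in a..b, w x ^ r ≤
        C * ((c - b)⁻¹ * ∫ x in b..c, w x) ^ r) :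
    ∃ C' : ℝ, ∀ a b c : ℝ, a < b → b < c → b - a = c - b →
      (b - a)⁻¹ * ∫ x in a..b, w x ^ r ≤
        C' * ((c - b)⁻¹ * ∫ x in b..c, w x) ^ r := by
  refine ⟨max C 0 * 2 ^ r, fun a b c hab hbc heq => ?_⟩
  set m := b + (c - b) / 2 with hm
  have hbm : b < m := by rw [hm]; linarith
  have hmc : m < c := by rw [hm]; linarith
  have h2 : b - a = 2 * (m - b) := by rw [hm]; linarith
  have key := hC a b m hab hbm h2
  have hint : ∀ x y : ℝ, IntervalIntegrable w volume x y := fun x y =>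
    (hloc.integrableOn_isCompact isCompact_uIcc).intervalIntegrable
  have hIbm : IntervalIntegrable w volume b m := hint b m
  have hImc : IntervalIntegrable w volume m c := hint m c
  have hmono : (∫ x in b..m, w x) ≤ ∫ x in b..c, w x := by
    rw [← integral_add_adjacent_intervals hIbm hImc]
    have h0 : 0 ≤ ∫ x in m..c, w x := integral_nonneg hmc.le fun x _ => hw x
    linarith
  have hZ : 0 ≤ (c - b)⁻¹ * ∫ x in b..c, w x := by
    have h0 : 0 ≤ ∫ x in b..c, w x := integral_nonneg hbc.le fun x _ => hw x
    exact mul_nonneg (inv_nonneg.mpr (by linarith)) h0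
  have hXnn : 0 ≤ (m - b)⁻¹ * ∫ x in b..m, w x := by
    have h0 : 0 ≤ ∫ x in b..m, w x := integral_nonneg hbm.le fun x _ => hw x
    exact mul_nonneg (inv_nonneg.mpr (by linarith)) h0
  have hmb : (m - b)⁻¹ = 2 * (c - b)⁻¹ := by
    have h : m - b = (c - b) / 2 := by rw [hm]; ring
    rw [h, inv_div, div_eq_mul_inv]
  have hX : (m - b)⁻¹ * ∫ x in b..m, w x ≤ 2 * ((c - b)⁻¹ * ∫ x in b..c, w x) := by
    rw [hmb, mul_assoc]
    exact mul_le_mul_of_nonneg_left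
      (mul_le_mul_of_nonneg_left hmono (inv_nonneg.mpr (by linarith))) (by norm_num)
  calc (b - a)⁻¹ * ∫ x in a..b, w x ^ r
      ≤ C * ((m - b)⁻¹ * ∫ x in b..m, w x) ^ r := key
    _ ≤ max C 0 * ((m - b)⁻¹ * ∫ x in b..m, w x) ^ r :=
        mul_le_mul_of_nonneg_right (le_max_left C 0) (Real.rpow_nonneg hXnn r)
    _ ≤ max C 0 * (2 * ((c - b)⁻¹ * ∫ x in b..c, w x)) ^ r :=
        mul_le_mul_of_nonneg_left (Real.rpow_le_rpow hXnn hX (by linarith))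
          (le_max_right C 0)
    _ = max C 0 * 2 ^ r * ((c - b)⁻¹ * ∫ x in b..c, w x) ^ r := by
        rw [Real.mul_rpow (by norm_num) hZ, mul_assoc]
end

section
/- Let w : (a, b) → [0, ∞) be integrable with ∫_a^b w > 0, let θ > -1, r = θ + 2, and suppose there exist λ_I ≥ 0 and C_H > 1 with r < C_H/(C_H - 1) such that for all λ ≥ λ_I, ∫_{{x ∈ (a,b) : w(x) > λ}} w(x) dx ≤ C_H λ |{x ∈ (a,b) : w(x) > λ}|. Assume furthermore that w is bounded (so all integrals below are finite). Then ∫_a^b w(x)^r dx ≤ C λ_I^{r-1} ∫_a^b w(x) dx, where C depends only on C_H and r. -/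
/-!
With `ν = w dx` we have `∫ w^r = ∫ w^(r-1) dν = (r-1) ∫₀^∞ t^(r-2) ν{w > t} dt` by the layer-cake
formula for `ν`. For `t ≤ λ_I` bound `ν{w > t}` by `ν(a,b) = ∫ w`, which contributes
`λ_I^(r-1) ∫ w`. For `t > λ_I` the good-λ hypothesis `ν{w > t} ≤ C_H t |{w > t}|` together with
the layer-cake formula for Lebesgue measure bounds the rest by `C_H (r-1)/r ∫ w^r`. Since `w` is
bounded, `∫ w^r` is finite and this term can be absorbed as soon as `C_H (r-1) < r`.
-/

open MeasureTheory Set ENNReal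

theorem lintegral_Ioc_zero_rpow {p a : ℝ} (hp : -1 < p) (ha : 0 ≤ a) :
    ∫⁻ t in Ioc 0 a, ENNReal.ofReal (t ^ p) = ENNReal.ofReal (a ^ (p + 1) / (p + 1)) := by
  rw [← ofReal_integral_eq_lintegral_ofReal (intervalIntegral.intervalIntegrable_rpow' hp).1
      (ae_restrict_of_forall_mem measurableSet_Ioc fun t ht => Real.rpow_nonneg ht.1.le _),
    ← intervalIntegral.integral_of_le ha, integral_rpow (Or.inl hp),
    Real.zero_rpow (by linarith : (0 : ℝ) < p + 1).ne', sub_zero]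

theorem lintegral_Ioi_mul_rpow_le_of_le_mul {φ ψ : ℝ → ℝ≥0∞} {C lam p : ℝ} (hlam : 0 ≤ lam)
    (hφψ : ∀ t, lam ≤ t → φ t ≤ ENNReal.ofReal (C * t) * ψ t) :
    ∫⁻ t in Ioi lam, φ t * ENNReal.ofReal (t ^ p) ≤
      ENNReal.ofReal C * ∫⁻ t in Ioi 0, ψ t * ENNReal.ofReal (t ^ (p + 1)) := by
  calc ∫⁻ t in Ioi lam, φ t * ENNReal.ofReal (t ^ p)
      ≤ ∫⁻ t in Ioi lam, ENNReal.ofReal C * (ψ t * ENNReal.ofReal (t ^ (p + 1))) := by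
        refine setLIntegral_mono' measurableSet_Ioi fun t ht => ?_
        have ht0 : 0 < t := hlam.trans_lt ht
        calc φ t * ENNReal.ofReal (t ^ p)
            ≤ ENNReal.ofReal (C * t) * ψ t * ENNReal.ofReal (t ^ p) := by
              gcongr; exact hφψ t (le_of_lt ht)
          _ = ENNReal.ofReal C * (ψ t * ENNReal.ofReal (t ^ (p + 1))) := by
              rw [Real.rpow_add_one ht0.ne', ENNReal.ofReal_mul' ht0.le,
                ENNReal.ofReal_mul' ht0.le]
              ring
    _ = ENNReal.ofReal C * ∫⁻ t in Ioi lam, ψ t * ENNReal.ofReal (t ^ (p + 1)) :=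
        lintegral_const_mul' _ _ ENNReal.ofReal_ne_top
    _ ≤ ENNReal.ofReal C * ∫⁻ t in Ioi 0, ψ t * ENNReal.ofReal (t ^ (p + 1)) := by
        gcongr

section GoodLambda

variable {α : Type*} [MeasurableSpace α] {μ : Measure α} {f : α → ℝ}

theorem lintegral_rpow_eq_lintegral_rpow_sub_one_withDensity (hf0 : 0 ≤ᵐ[μ] f)
    (hf : AEMeasurable f μ) {r : ℝ} (hr : r ≠ 0) :
    ∫⁻ x, ENNReal.ofReal (f x ^ r) ∂μ =
      ∫⁻ x, ENNReal.ofReal (f x ^ (r - 1)) ∂μ.withDensity fun x => ENNReal.ofReal (f x) := by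
  rw [lintegral_withDensity_eq_lintegral_mul₀ hf.ennreal_ofReal
    (hf.pow_const _).ennreal_ofReal]
  refine lintegral_congr_ae (hf0.mono fun x hx => ?_)
  rw [Pi.mul_apply, ← ENNReal.ofReal_mul hx, mul_comm, ← Real.rpow_add_one' hx (by simpa),
    sub_add_cancel]

theorem lintegral_rpow_le_of_good_lambda [SFinite μ] (hf0 : 0 ≤ᵐ[μ] f) (hf : AEMeasurable f μ)
    {C r lam : ℝ} (hr : 1 < r) (hlam : 0 ≤ lam)
    (hgood : ∀ t, lam ≤ t → ∫⁻ x in {x | t < f x}, ENNReal.ofReal (f x) ∂μ ≤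
      ENNReal.ofReal (C * t) * μ {x | t < f x}) :
    ∫⁻ x, ENNReal.ofReal (f x ^ r) ∂μ ≤
      ENNReal.ofReal (lam ^ (r - 1)) * ∫⁻ x, ENNReal.ofReal (f x) ∂μ +
        ENNReal.ofReal (C * (r - 1) / r) * ∫⁻ x, ENNReal.ofReal (f x ^ r) ∂μ := by
  set ν := μ.withDensity fun x => ENNReal.ofReal (f x)
  have hν : ∀ s, ν s = ∫⁻ x in s, ENNReal.ofReal (f x) ∂μ := withDensity_apply' _
  have hνμ : ν ≪ μ := withDensity_absolutelyContinuous _ _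
  set K := ∫⁻ t in Ioi 0, μ {x | t < f x} * ENNReal.ofReal (t ^ (r - 1))
  have hK : ∫⁻ x, ENNReal.ofReal (f x ^ r) ∂μ = ENNReal.ofReal r * K :=
    lintegral_rpow_eq_lintegral_meas_lt_mul μ hf0 hf (by linarith)
  have hhead : ∫⁻ t in Ioc 0 lam, ν {x | t < f x} * ENNReal.ofReal (t ^ (r - 1 - 1)) ≤
      ν univ * ENNReal.ofReal (lam ^ (r - 1) / (r - 1)) := by
    calc ∫⁻ t in Ioc 0 lam, ν {x | t < f x} * ENNReal.ofReal (t ^ (r - 1 - 1))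
        ≤ ∫⁻ t in Ioc 0 lam, ν univ * ENNReal.ofReal (t ^ (r - 1 - 1)) := by
          gcongr; exact subset_univ _
      _ = ν univ * ENNReal.ofReal (lam ^ (r - 1) / (r - 1)) := by
          rw [lintegral_const_mul _ (by fun_prop), lintegral_Ioc_zero_rpow (by linarith) hlam,
            sub_add_cancel]
  have htail : ∫⁻ t in Ioi lam, ν {x | t < f x} * ENNReal.ofReal (t ^ (r - 1 - 1)) ≤
      ENNReal.ofReal C * K := by
    simpa only [sub_add_cancel] using lintegral_Ioi_mul_rpow_le_of_le_mul (p := r - 1 - 1) hlam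
      fun t ht => (hν _).trans_le (hgood t ht)
  calc ∫⁻ x, ENNReal.ofReal (f x ^ r) ∂μ
      = ∫⁻ x, ENNReal.ofReal (f x ^ (r - 1)) ∂ν :=
        lintegral_rpow_eq_lintegral_rpow_sub_one_withDensity hf0 hf (by linarith)
    _ = ENNReal.ofReal (r - 1) *
          ∫⁻ t in Ioi 0, ν {x | t < f x} * ENNReal.ofReal (t ^ (r - 1 - 1)) :=
        lintegral_rpow_eq_lintegral_meas_lt_mul ν (hνμ.ae_le hf0) (hf.mono_ac hνμ)
          (by linarith)
    _ = ENNReal.ofReal (r - 1) *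
          ((∫⁻ t in Ioc 0 lam, ν {x | t < f x} * ENNReal.ofReal (t ^ (r - 1 - 1))) +
            ∫⁻ t in Ioi lam, ν {x | t < f x} * ENNReal.ofReal (t ^ (r - 1 - 1))) := by
        rw [← Ioc_union_Ioi_eq_Ioi hlam, lintegral_union measurableSet_Ioi Ioc_disjoint_Ioi_same]
    _ ≤ ENNReal.ofReal (r - 1) *
          (ν univ * ENNReal.ofReal (lam ^ (r - 1) / (r - 1)) + ENNReal.ofReal C * K) := by
        gcongr
    _ = ENNReal.ofReal (lam ^ (r - 1)) * ∫⁻ x, ENNReal.ofReal (f x) ∂μ +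
          ENNReal.ofReal (C * (r - 1) / r) * ∫⁻ x, ENNReal.ofReal (f x ^ r) ∂μ := by
        have hr1 : ENNReal.ofReal (r - 1) * ENNReal.ofReal (lam ^ (r - 1) / (r - 1)) =
            ENNReal.ofReal (lam ^ (r - 1)) := by
          rw [← ENNReal.ofReal_mul (by linarith), mul_div_cancel₀ _ (by linarith)]
        have hCr : ENNReal.ofReal (C * (r - 1) / r) * ENNReal.ofReal r =
            ENNReal.ofReal C * ENNReal.ofReal (r - 1) := by
          rw [← ENNReal.ofReal_mul' (by linarith), div_mul_cancel₀ _ (by linarith),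
            ENNReal.ofReal_mul' (by linarith)]
        rw [hK, hν, Measure.restrict_univ, ← hr1, ← mul_assoc _ (ENNReal.ofReal r), hCr]
        ring

theorem integral_rpow_le_of_good_lambda [IsFiniteMeasure μ] (hf0 : 0 ≤ᵐ[μ] f)
    (hf : Integrable f μ) {C r lam : ℝ} (hC : 0 ≤ C) (hr : 1 < r) (hrC : C * (r - 1) < r)
    (hlam : 0 ≤ lam) (hfr : Integrable (fun x => f x ^ r) μ)
    (hgood : ∀ t, lam ≤ t → ∫ x in {x | t < f x}, f x ∂μ ≤ C * t * (μ {x | t < f x}).toReal) :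
    ∫ x, f x ^ r ∂μ ≤ r / (r - C * (r - 1)) * lam ^ (r - 1) * ∫ x, f x ∂μ := by
  have key := lintegral_rpow_le_of_good_lambda hf0 hf.aemeasurable hr hlam fun t ht => by
    rw [← ofReal_integral_eq_lintegral_ofReal hf.integrableOn (ae_restrict_of_ae hf0),
      ← ENNReal.ofReal_toReal (measure_ne_top μ {x | t < f x}),
      ← ENNReal.ofReal_mul (mul_nonneg hC (hlam.trans ht))]
    exact ENNReal.ofReal_le_ofReal (hgood t ht)
  have hfr0 : 0 ≤ᵐ[μ] fun x => f x ^ r := hf0.mono fun x hx => Real.rpow_nonneg hx r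
  have hF := integral_nonneg_of_ae hf0
  have hFr := integral_nonneg_of_ae hfr0
  have hc : 0 ≤ C * (r - 1) / r := div_nonneg (mul_nonneg hC (by linarith)) (by linarith)
  have hL := Real.rpow_nonneg hlam (r - 1)
  rw [← ofReal_integral_eq_lintegral_ofReal hfr hfr0, ← ofReal_integral_eq_lintegral_ofReal hf hf0,
    ← ENNReal.ofReal_mul hL, ← ENNReal.ofReal_mul hc,
    ← ENNReal.ofReal_add (mul_nonneg hL hF) (mul_nonneg hc hFr),
    ENNReal.ofReal_le_ofReal_iff (by positivity)] at key
  rw [div_mul_eq_mul_div, div_mul_eq_mul_div, le_div_iff₀ (by linarith)]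
  field_simp at key
  linarith

end GoodLambda

/-- A one-sided level-set (good-λ) estimate above a threshold `λ_I` implies a
reverse Hölder type bound `∫ w^r ≤ C λ_I^{r-1} ∫ w`, provided
`r < C_H/(C_H - 1)`. -/
theorem good_lambda_implies_reverse_holder (CH r : ℝ) (hCH : 1 < CH)
    (hr1 : 1 < r) (hrC : r < CH / (CH - 1)) :
    ∃ C : ℝ, 0 ≤ C ∧ ∀ (a b : ℝ), a < b → ∀ (w : ℝ → ℝ), (∀ x, 0 ≤ w x) →
      IntegrableOn w (Set.Ioo a b) volume →
      (0 < ∫ x in Set.Ioo a b, w x) →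
      (∃ M : ℝ, ∀ x, w x ≤ M) →
      ∀ lamI : ℝ, 0 ≤ lamI →
      (∀ lam : ℝ, lamI ≤ lam →
        ∫ x in {x ∈ Set.Ioo a b | lam < w x}, w x ≤
          CH * lam * (volume {x ∈ Set.Ioo a b | lam < w x}).toReal) →
      ∫ x in Set.Ioo a b, w x ^ r ≤ C * lamI ^ (r - 1) * ∫ x in Set.Ioo a b, w x := by
  have hCHr : CH * (r - 1) < r := by
    rw [lt_div_iff₀ (by linarith)] at hrC
    linarith
  refine ⟨r / (r - CH * (r - 1)), div_nonneg (by linarith) (by linarith), ?_⟩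
  rintro a b - w hw0 hw - ⟨M, hM⟩ lamI hlamI hgood
  have : IsFiniteMeasure (volume.restrict (Ioo a b)) :=
    isFiniteMeasure_restrict.mpr measure_Ioo_lt_top.ne
  have hwr : IntegrableOn (fun x => w x ^ r) (Ioo a b) :=
    Integrable.of_bound (hw.aemeasurable.pow_const r).aestronglyMeasurable (M ^ r)
      (Filter.Eventually.of_forall fun x => by
        rw [Real.norm_of_nonneg (Real.rpow_nonneg (hw0 x) r)]
        exact Real.rpow_le_rpow (hw0 x) (hM x) (by linarith))
  refine integral_rpow_le_of_good_lambda (Filter.Eventually.of_forall hw0) hw (by linarith) hr1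
    hCHr hlamI hwr fun t ht => ?_
  rw [Measure.restrict_restrict' measurableSet_Ioo, Measure.restrict_apply' measurableSet_Ioo,
    inter_comm]
  exact hgood t ht
end

section
/- Let 1 < p < ∞ and let w ∈ A_p^+ with constant A. Suppose additionally that w ∈ RH_r^+ and w^{1-p'} ∈ RH_r^- for some r > 1, in the sense that for all a < b < c < d positioned as below: (1/|I₁|)∫_{I₁} w^r ≤ C ((1/|I₂|)∫_{I₂} w)^r and (1/|I₄|)∫_{I₄} w^{r(1-p')} ≤ C ((1/|I₃|)∫_{I₃} w^{1-p'})^r, where for fixed a < d we set b = (d+3a)/4, c = (3d+a)/4, I₁=(a,b), I₂=(b,(b+c)/2), I₃=((b+c)/2,c), I₄=(c,d). Then w^r ∈ A_p^+: for all such a < d, ((1/|I₁|)∫_{I₁} w^r)((1/|I₄|)∫_{I₄} (w^r)^{1-p'})^{p-1} ≤ C' where C' depends only on A, C, p, r. -/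
/-!
The reverse Hölder inequalities bound the averages of `w ^ r` over `I₁` and of
`(w ^ r) ^ (1 - p')` over `I₄` by `C` times the `r`-th powers of the averages of `w` over `I₂`
and of `w ^ (1 - p')` over `I₃`. Hence the `A_p^+` product of `w ^ r` on `(I₁, I₄)` is at most
`C ^ p` times the `r`-th power of the `A_p^+` product of `w` on `(I₂, I₃)`, and the latter is
bounded by `2 ^ p * A` because `I₂ ∪ I₃` has twice the length of each quarter.
-/

open MeasureTheory intervalIntegral

lemma inv_mul_mul_inv_mul_rpow_sub_one_le {p h X Y A : ℝ} (hh : 0 < h) (hY : 0 ≤ Y)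
    (hA : ((2 * h) ^ p)⁻¹ * X * Y ^ (p - 1) ≤ A) :
    h⁻¹ * X * (h⁻¹ * Y) ^ (p - 1) ≤ 2 ^ p * A := by
  have hhp : h ^ p = h * h ^ (p - 1) := by
    rw [Real.rpow_sub_one hh.ne']
    field_simp
  calc h⁻¹ * X * (h⁻¹ * Y) ^ (p - 1)
      = 2 ^ p * (((2 * h) ^ p)⁻¹ * X * Y ^ (p - 1)) := by
        rw [Real.mul_rpow (by positivity) hY, Real.mul_rpow zero_le_two hh.le, hhp,
          Real.inv_rpow hh.le]
        field_simp
    _ ≤ 2 ^ p * A := by gcongr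

lemma rpow_mul_rpow_rpow_sub_one {u v : ℝ} (hu : 0 ≤ u) (hv : 0 ≤ v) (p r : ℝ) :
    u ^ r * (v ^ r) ^ (p - 1) = (u * v ^ (p - 1)) ^ r := by
  rw [Real.mul_rpow hu (by positivity), ← Real.rpow_mul hv, ← Real.rpow_mul hv, mul_comm r]

lemma mul_rpow_sub_one_le_of_le_mul_rpow {p r C K s t u v : ℝ} (hp : 1 ≤ p) (hr : 0 ≤ r)
    (ht : 0 ≤ t) (hu : 0 ≤ u) (hv : 0 ≤ v)
    (hsu : s ≤ C * u ^ r) (htv : t ≤ C * v ^ r) (huv : u * v ^ (p - 1) ≤ K) :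
    s * t ^ (p - 1) ≤ max C 0 ^ p * K ^ r := by
  set C₀ := max C 0
  have hC₀ : 0 ≤ C₀ := le_max_right C 0
  have hC₀p : C₀ ^ p = C₀ * C₀ ^ (p - 1) := by
    rw [← Real.rpow_one_add' hC₀ (by linarith)]
    ring_nf
  calc s * t ^ (p - 1)
      ≤ C₀ * u ^ r * (C₀ * v ^ r) ^ (p - 1) := by
        gcongr
        · exact hsu.trans (by gcongr; exact le_max_left C 0)
        · exact htv.trans (by gcongr; exact le_max_left C 0)
    _ = C₀ ^ p * (u * v ^ (p - 1)) ^ r := by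
        rw [Real.mul_rpow hC₀ (by positivity), ← rpow_mul_rpow_rpow_sub_one hu hv, hC₀p]
        ring
    _ ≤ C₀ ^ p * K ^ r := by gcongr

theorem ap_plus_power_bump_general (p p' r A C : ℝ) (hp : 1 < p)
    (hr : 1 < r) (w : ℝ → ℝ) (hw : ∀ x, 0 ≤ w x)
    (hA : ∀ a b c : ℝ, a < b → b < c →
      ((c - a) ^ p)⁻¹ * (∫ x in a..b, w x) *
        (∫ x in b..c, w x ^ (1 - p')) ^ (p - 1) ≤ A)
    (hRH₁ : ∀ a d : ℝ, a < d →
      ((d - a) / 4)⁻¹ * ∫ x in a..((d + 3 * a) / 4), w x ^ r ≤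
        C * (((d - a) / 4)⁻¹ * ∫ x in ((d + 3 * a) / 4)..((a + d) / 2), w x) ^ r)
    (hRH₂ : ∀ a d : ℝ, a < d →
      ((d - a) / 4)⁻¹ * ∫ x in ((3 * d + a) / 4)..d, (w x ^ r) ^ (1 - p') ≤
        C * (((d - a) / 4)⁻¹ *
          ∫ x in ((a + d) / 2)..((3 * d + a) / 4), w x ^ (1 - p')) ^ r) :
    ∃ C' : ℝ, ∀ a d : ℝ, a < d →
      (((d - a) / 4)⁻¹ * ∫ x in a..((d + 3 * a) / 4), w x ^ r) *
        (((d - a) / 4)⁻¹ *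
          ∫ x in ((3 * d + a) / 4)..d, (w x ^ r) ^ (1 - p')) ^ (p - 1) ≤ C' := by
  refine ⟨max C 0 ^ p * (2 ^ p * A) ^ r, fun a d had => ?_⟩
  have hh : 0 < (d - a) / 4 := by linarith
  have average_nonneg : ∀ {f : ℝ → ℝ} {s t : ℝ}, s ≤ t → (∀ x, 0 ≤ f x) →
      0 ≤ ((d - a) / 4)⁻¹ * ∫ x in s..t, f x := fun hst hf =>
    mul_nonneg (inv_nonneg.2 hh.le) (integral_nonneg hst fun x _ => hf x)
  have hAp := hA ((d + 3 * a) / 4) ((a + d) / 2) ((3 * d + a) / 4) (by linarith) (by linarith)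
  rw [show (3 * d + a) / 4 - (d + 3 * a) / 4 = 2 * ((d - a) / 4) by ring] at hAp
  exact mul_rpow_sub_one_le_of_le_mul_rpow hp.le (by linarith)
    (average_nonneg (by linarith) fun x => Real.rpow_nonneg (Real.rpow_nonneg (hw x) r) _)
    (average_nonneg (by linarith) hw)
    (average_nonneg (by linarith) fun x => Real.rpow_nonneg (hw x) _)
    (hRH₁ a d had) (hRH₂ a d had)
    (inv_mul_mul_inv_mul_rpow_sub_one_le hh
      (integral_nonneg (by linarith) fun x _ => Real.rpow_nonneg (hw x) _) hAp)

/-- Power bump (open property step): `A_p^+` together with the one-sided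
reverse Hölder conditions `w ∈ RH_r^+` and `w^{1-p'} ∈ RH_r^-` on the four
quarter-type intervals yields `w^r ∈ A_p^+` on the outer pair of intervals. -/
theorem ap_plus_power_bump (p p' r A C : ℝ) (hp : 1 < p) (hp' : 1 / p + 1 / p' = 1)
    (hr : 1 < r) (w : ℝ → ℝ) (hw : ∀ x, 0 ≤ w x)
    (hloc : LocallyIntegrable w volume)
    (hlocr : LocallyIntegrable (fun x => w x ^ r) volume)
    (hloc' : LocallyIntegrable (fun x => w x ^ (1 - p')) volume)
    (hlocr' : LocallyIntegrable (fun x => (w x ^ r) ^ (1 - p')) volume)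
    (hA : ∀ a b c : ℝ, a < b → b < c →
      ((c - a) ^ p)⁻¹ * (∫ x in a..b, w x) *
        (∫ x in b..c, w x ^ (1 - p')) ^ (p - 1) ≤ A)
    (hRH₁ : ∀ a d : ℝ, a < d →
      ((d - a) / 4)⁻¹ * ∫ x in a..((d + 3 * a) / 4), w x ^ r ≤
        C * (((d - a) / 4)⁻¹ * ∫ x in ((d + 3 * a) / 4)..((a + d) / 2), w x) ^ r)
    (hRH₂ : ∀ a d : ℝ, a < d →
      ((d - a) / 4)⁻¹ * ∫ x in ((3 * d + a) / 4)..d, (w x ^ r) ^ (1 - p') ≤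
        C * (((d - a) / 4)⁻¹ *
          ∫ x in ((a + d) / 2)..((3 * d + a) / 4), w x ^ (1 - p')) ^ r) :
    ∃ C' : ℝ, ∀ a d : ℝ, a < d →
      (((d - a) / 4)⁻¹ * ∫ x in a..((d + 3 * a) / 4), w x ^ r) *
        (((d - a) / 4)⁻¹ *
          ∫ x in ((3 * d + a) / 4)..d, (w x ^ r) ^ (1 - p')) ^ (p - 1) ≤ C' :=
  ap_plus_power_bump_general p p' r A C hp hr w hw hA hRH₁ hRH₂
end
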